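/- Let U₃₂ ⊆ ℝ² be the union of the octagonal orbits ⟨a₁⟩₈, ⟨b₁⟩₈, ⟨c₁⟩₈, ⟨d₁⟩₈ of the points a₁ = (4,0), b₁ = (2 + √2, √2), c₁ = (−2 + 4√2, −2 + 2√2), d₁ = (6 − 2√2, 2), and let W = U₃₂ + U₃₂ = {x + y : x, y ∈ U₃₂} be its 2-fold Minkowski sum. Then there exists a coloring c : W → Fin 4 such that c x ≠ c y whenever x, y ∈ W satisfy x − y ∈ U₃₂; that is, the graph on W whose edges are the pairs whose difference lies in U₃₂ is 4-colorable. -/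
import Mathlib

noncomputable section

/-- The regular octagon: convex hull of its eight vertices. -/
def C8 : Set (ℝ × ℝ) :=
  convexHull ℝ
    {(4, 0), (2 * Real.sqrt 2, 2 * Real.sqrt 2), (0, 4),
     (-(2 * Real.sqrt 2), 2 * Real.sqrt 2), (-4, 0),
     (-(2 * Real.sqrt 2), -(2 * Real.sqrt 2)), (0, -4),
     (2 * Real.sqrt 2, -(2 * Real.sqrt 2))}

/-- Rotation of the plane about the origin by angle `θ`. -/
def rot (θ : ℝ) (p : ℝ × ℝ) : ℝ × ℝ :=
  (p.1 * Real.cos θ - p.2 * Real.sin θ, p.1 * Real.sin θ + p.2 * Real.cos θ)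

/-- The octagonal orbit of a point: its images under rotations by `kπ/4`, `k = 0, …, 7`. -/
def orb8 (p : ℝ × ℝ) : Set (ℝ × ℝ) :=
  Set.range fun k : Fin 8 => rot ((k : ℕ) * Real.pi / 4) p

/-- The set of 32 generating unit vectors in the regular octagon metric. -/
def U32 : Set (ℝ × ℝ) :=
  orb8 (4, 0) ∪ orb8 (2 + Real.sqrt 2, Real.sqrt 2) ∪
  orb8 (-2 + 4 * Real.sqrt 2, -2 + 2 * Real.sqrt 2) ∪ orb8 (6 - 2 * Real.sqrt 2, 2)

/-- The 2-fold Minkowski sum `U₃₂ + U₃₂`. -/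
def W32 : Set (ℝ × ℝ) := Set.image2 (· + ·) U32 U32

-- ### Auxiliary development

abbrev Q4 := ℤ × ℤ × ℤ × ℤ

def emb (q : Q4) : ℝ × ℝ :=
  ((q.1 : ℝ) + (q.2.1 : ℝ) * Real.sqrt 2, (q.2.2.1 : ℝ) + (q.2.2.2 : ℝ) * Real.sqrt 2)

def psiq (q : Q4) : ℤ := -q.1 + q.2.2.1 + 6 * q.2.2.2

lemma sqrt2_sq : Real.sqrt 2 * Real.sqrt 2 = 2 := Real.mul_self_sqrt (by norm_num)

lemma sqrt2_unique {a b a' b' : ℤ} (h : (a : ℝ) + b * Real.sqrt 2 = a' + b' * Real.sqrt 2) :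
    a = a' ∧ b = b' := by
  by_cases hb : b = b'
  · subst hb
    have : (a : ℝ) = a' := by linarith
    exact ⟨by exact_mod_cast this, rfl⟩
  · exfalso
    have hbr : ((b : ℝ) - b') ≠ 0 := by
      intro h0
      apply hb
      have : (b : ℝ) = b' := by linarith
      exact_mod_cast this
    have hs : Real.sqrt 2 = ((a' - a : ℤ) : ℝ) / ((b - b' : ℤ) : ℝ) := by
      push_cast
      field_simp
      linarith
    have : Irrational (Real.sqrt 2) := irrational_sqrt_two
    apply this
    refine ⟨((a' - a : ℤ) : ℚ) / ((b - b' : ℤ) : ℚ), ?_⟩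
    rw [hs]
    push_cast
    ring
  
lemma emb_inj {q q' : Q4} (h : emb q = emb q') : q = q' := by
  obtain ⟨a, b, c, d⟩ := q
  obtain ⟨a', b', c', d'⟩ := q'
  simp only [emb, Prod.mk.injEq] at h
  obtain ⟨h1, h2⟩ := h
  obtain ⟨ha, hb⟩ := sqrt2_unique h1
  obtain ⟨hc, hd⟩ := sqrt2_unique h2
  simp_all

lemma emb_add (q q' : Q4) : emb (q + q') = emb q + emb q' := by
  obtain ⟨a, b, c, d⟩ := q
  obtain ⟨a', b', c', d'⟩ := q'
  simp only [emb, Prod.mk_add_mk, Prod.mk.injEq]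
  constructor <;> · push_cast; ring

lemma emb_sub (q q' : Q4) : emb (q - q') = emb q - emb q' := by
  obtain ⟨a, b, c, d⟩ := q
  obtain ⟨a', b', c', d'⟩ := q'
  simp only [emb, Prod.mk_sub_mk, Prod.mk.injEq]
  constructor <;> · push_cast; ring

lemma psiq_add (q q' : Q4) : psiq (q + q') = psiq q + psiq q' := by
  obtain ⟨a, b, c, d⟩ := q; obtain ⟨a', b', c', d'⟩ := q'
  simp only [psiq, Prod.fst_add, Prod.snd_add]; ring

lemma psiq_sub (q q' : Q4) : psiq (q - q') = psiq q - psiq q' := by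
  obtain ⟨a, b, c, d⟩ := q; obtain ⟨a', b', c', d'⟩ := q'
  simp only [psiq, Prod.fst_sub, Prod.snd_sub]; ring

lemma rot_add (θ φ : ℝ) (p : ℝ × ℝ) : rot (θ + φ) p = rot θ (rot φ p) := by
  simp only [rot, Real.cos_add, Real.sin_add, Prod.mk.injEq]
  constructor <;> ring

lemma rot_pi4_emb (a b c d a' b' c' d' : ℤ) (h1 : a' = b - d) (h2 : 2 * b' = a - c)
    (h3 : c' = b + d) (h4 : 2 * d' = a + c) :
    rot (Real.pi / 4) (emb (a, b, c, d)) = emb (a', b', c', d') := by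
  have h1' : (a' : ℝ) = b - d := by exact_mod_cast h1
  have h2' : 2 * (b' : ℝ) = a - c := by exact_mod_cast h2
  have h3' : (c' : ℝ) = b + d := by exact_mod_cast h3
  have h4' : 2 * (d' : ℝ) = a + c := by exact_mod_cast h4
  simp only [rot, emb, Real.cos_pi_div_four, Real.sin_pi_div_four, Prod.mk.injEq]
  constructor
  · linear_combination (-(Real.sqrt 2) / 2) * h2' + (((b : ℝ) - d) / 2) * sqrt2_sq - h1'
  · linear_combination (-(Real.sqrt 2) / 2) * h4' + (((b : ℝ) + d) / 2) * sqrt2_sq - h3'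

lemma rot_step (n : ℕ) (p x y : ℝ × ℝ) (h1 : rot ((n : ℕ) * Real.pi / 4) p = x)
    (h2 : rot (Real.pi / 4) x = y) : rot (((n + 1 : ℕ) : ℝ) * Real.pi / 4) p = y := by
  have h : ((n + 1 : ℕ) : ℝ) * Real.pi / 4 = Real.pi / 4 + (n : ℝ) * Real.pi / 4 := by
    push_cast; ring
  rw [h, rot_add, h1, h2]

def L32 : List Q4 :=
  [(4,0,0,0),
   (0,2,0,2),
   (0,0,4,0),
   (0,-2,0,2),
   (-4,0,0,0),
   (0,-2,0,-2),
   (0,0,-4,0),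
   (0,2,0,-2),
   (2,1,0,1),
   (0,1,2,1),
   (0,-1,2,1),
   (-2,-1,0,1),
   (-2,-1,0,-1),
   (0,-1,-2,-1),
   (0,1,-2,-1),
   (2,1,0,-1),
   (-2,4,-2,2),
   (2,0,6,-2),
   (2,-2,-2,4),
   (-6,2,2,0),
   (2,-4,2,-2),
   (-2,0,-6,2),
   (-2,2,2,-4),
   (6,-2,-2,0),
   (6,-2,2,0),
   (-2,2,-2,4),
   (-2,0,6,-2),
   (2,-4,-2,2),
   (-6,2,-2,0),
   (2,-2,2,-4),
   (2,0,-6,2),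
   (-2,4,2,-2)]

lemma orbit0 : ∀ x ∈ orb8 (emb (4,0,0,0)), ∃ qq ∈ L32, x = emb qq := by
  have s1 : rot (Real.pi / 4) (emb (4,0,0,0)) = emb (0,2,0,2) :=
    rot_pi4_emb 4 0 0 0 0 2 0 2 (by decide) (by decide) (by decide) (by decide)
  have s2 : rot (Real.pi / 4) (emb (0,2,0,2)) = emb (0,0,4,0) :=
    rot_pi4_emb 0 2 0 2 0 0 4 0 (by decide) (by decide) (by decide) (by decide)
  have s3 : rot (Real.pi / 4) (emb (0,0,4,0)) = emb (0,-2,0,2) :=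
    rot_pi4_emb 0 0 4 0 0 (-2) 0 2 (by decide) (by decide) (by decide) (by decide)
  have s4 : rot (Real.pi / 4) (emb (0,-2,0,2)) = emb (-4,0,0,0) :=
    rot_pi4_emb 0 (-2) 0 2 (-4) 0 0 0 (by decide) (by decide) (by decide) (by decide)
  have s5 : rot (Real.pi / 4) (emb (-4,0,0,0)) = emb (0,-2,0,-2) :=
    rot_pi4_emb (-4) 0 0 0 0 (-2) 0 (-2) (by decide) (by decide) (by decide) (by decide)
  have s6 : rot (Real.pi / 4) (emb (0,-2,0,-2)) = emb (0,0,-4,0) :=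
    rot_pi4_emb 0 (-2) 0 (-2) 0 0 (-4) 0 (by decide) (by decide) (by decide) (by decide)
  have s7 : rot (Real.pi / 4) (emb (0,0,-4,0)) = emb (0,2,0,-2) :=
    rot_pi4_emb 0 0 (-4) 0 0 2 0 (-2) (by decide) (by decide) (by decide) (by decide)
  have c0 : rot (((0 : ℕ) : ℝ) * Real.pi / 4) (emb (4,0,0,0)) = emb (4,0,0,0) := by
    simp [rot]
  have c1 : rot (((1 : ℕ) : ℝ) * Real.pi / 4) (emb (4,0,0,0)) = emb (0,2,0,2) :=
    rot_step 0 _ _ _ c0 s1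
  have c2 : rot (((2 : ℕ) : ℝ) * Real.pi / 4) (emb (4,0,0,0)) = emb (0,0,4,0) :=
    rot_step 1 _ _ _ c1 s2
  have c3 : rot (((3 : ℕ) : ℝ) * Real.pi / 4) (emb (4,0,0,0)) = emb (0,-2,0,2) :=
    rot_step 2 _ _ _ c2 s3
  have c4 : rot (((4 : ℕ) : ℝ) * Real.pi / 4) (emb (4,0,0,0)) = emb (-4,0,0,0) :=
    rot_step 3 _ _ _ c3 s4
  have c5 : rot (((5 : ℕ) : ℝ) * Real.pi / 4) (emb (4,0,0,0)) = emb (0,-2,0,-2) :=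
    rot_step 4 _ _ _ c4 s5
  have c6 : rot (((6 : ℕ) : ℝ) * Real.pi / 4) (emb (4,0,0,0)) = emb (0,0,-4,0) :=
    rot_step 5 _ _ _ c5 s6
  have c7 : rot (((7 : ℕ) : ℝ) * Real.pi / 4) (emb (4,0,0,0)) = emb (0,2,0,-2) :=
    rot_step 6 _ _ _ c6 s7
  rintro x ⟨k, rfl⟩
  fin_cases k
  · exact ⟨(4,0,0,0), by decide, c0⟩
  · exact ⟨(0,2,0,2), by decide, c1⟩
  · exact ⟨(0,0,4,0), by decide, c2⟩
  · exact ⟨(0,-2,0,2), by decide, c3⟩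
  · exact ⟨(-4,0,0,0), by decide, c4⟩
  · exact ⟨(0,-2,0,-2), by decide, c5⟩
  · exact ⟨(0,0,-4,0), by decide, c6⟩
  · exact ⟨(0,2,0,-2), by decide, c7⟩

lemma orbit1 : ∀ x ∈ orb8 (emb (2,1,0,1)), ∃ qq ∈ L32, x = emb qq := by
  have s1 : rot (Real.pi / 4) (emb (2,1,0,1)) = emb (0,1,2,1) :=
    rot_pi4_emb 2 1 0 1 0 1 2 1 (by decide) (by decide) (by decide) (by decide)
  have s2 : rot (Real.pi / 4) (emb (0,1,2,1)) = emb (0,-1,2,1) :=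
    rot_pi4_emb 0 1 2 1 0 (-1) 2 1 (by decide) (by decide) (by decide) (by decide)
  have s3 : rot (Real.pi / 4) (emb (0,-1,2,1)) = emb (-2,-1,0,1) :=
    rot_pi4_emb 0 (-1) 2 1 (-2) (-1) 0 1 (by decide) (by decide) (by decide) (by decide)
  have s4 : rot (Real.pi / 4) (emb (-2,-1,0,1)) = emb (-2,-1,0,-1) :=
    rot_pi4_emb (-2) (-1) 0 1 (-2) (-1) 0 (-1) (by decide) (by decide) (by decide) (by decide)
  have s5 : rot (Real.pi / 4) (emb (-2,-1,0,-1)) = emb (0,-1,-2,-1) :=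
    rot_pi4_emb (-2) (-1) 0 (-1) 0 (-1) (-2) (-1) (by decide) (by decide) (by decide) (by decide)
  have s6 : rot (Real.pi / 4) (emb (0,-1,-2,-1)) = emb (0,1,-2,-1) :=
    rot_pi4_emb 0 (-1) (-2) (-1) 0 1 (-2) (-1) (by decide) (by decide) (by decide) (by decide)
  have s7 : rot (Real.pi / 4) (emb (0,1,-2,-1)) = emb (2,1,0,-1) :=
    rot_pi4_emb 0 1 (-2) (-1) 2 1 0 (-1) (by decide) (by decide) (by decide) (by decide)
  have c0 : rot (((0 : ℕ) : ℝ) * Real.pi / 4) (emb (2,1,0,1)) = emb (2,1,0,1) := by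
    simp [rot]
  have c1 : rot (((1 : ℕ) : ℝ) * Real.pi / 4) (emb (2,1,0,1)) = emb (0,1,2,1) :=
    rot_step 0 _ _ _ c0 s1
  have c2 : rot (((2 : ℕ) : ℝ) * Real.pi / 4) (emb (2,1,0,1)) = emb (0,-1,2,1) :=
    rot_step 1 _ _ _ c1 s2
  have c3 : rot (((3 : ℕ) : ℝ) * Real.pi / 4) (emb (2,1,0,1)) = emb (-2,-1,0,1) :=
    rot_step 2 _ _ _ c2 s3
  have c4 : rot (((4 : ℕ) : ℝ) * Real.pi / 4) (emb (2,1,0,1)) = emb (-2,-1,0,-1) :=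
    rot_step 3 _ _ _ c3 s4
  have c5 : rot (((5 : ℕ) : ℝ) * Real.pi / 4) (emb (2,1,0,1)) = emb (0,-1,-2,-1) :=
    rot_step 4 _ _ _ c4 s5
  have c6 : rot (((6 : ℕ) : ℝ) * Real.pi / 4) (emb (2,1,0,1)) = emb (0,1,-2,-1) :=
    rot_step 5 _ _ _ c5 s6
  have c7 : rot (((7 : ℕ) : ℝ) * Real.pi / 4) (emb (2,1,0,1)) = emb (2,1,0,-1) :=
    rot_step 6 _ _ _ c6 s7
  rintro x ⟨k, rfl⟩
  fin_cases k
  · exact ⟨(2,1,0,1), by decide, c0⟩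
  · exact ⟨(0,1,2,1), by decide, c1⟩
  · exact ⟨(0,-1,2,1), by decide, c2⟩
  · exact ⟨(-2,-1,0,1), by decide, c3⟩
  · exact ⟨(-2,-1,0,-1), by decide, c4⟩
  · exact ⟨(0,-1,-2,-1), by decide, c5⟩
  · exact ⟨(0,1,-2,-1), by decide, c6⟩
  · exact ⟨(2,1,0,-1), by decide, c7⟩

lemma orbit2 : ∀ x ∈ orb8 (emb (-2,4,-2,2)), ∃ qq ∈ L32, x = emb qq := by
  have s1 : rot (Real.pi / 4) (emb (-2,4,-2,2)) = emb (2,0,6,-2) :=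
    rot_pi4_emb (-2) 4 (-2) 2 2 0 6 (-2) (by decide) (by decide) (by decide) (by decide)
  have s2 : rot (Real.pi / 4) (emb (2,0,6,-2)) = emb (2,-2,-2,4) :=
    rot_pi4_emb 2 0 6 (-2) 2 (-2) (-2) 4 (by decide) (by decide) (by decide) (by decide)
  have s3 : rot (Real.pi / 4) (emb (2,-2,-2,4)) = emb (-6,2,2,0) :=
    rot_pi4_emb 2 (-2) (-2) 4 (-6) 2 2 0 (by decide) (by decide) (by decide) (by decide)
  have s4 : rot (Real.pi / 4) (emb (-6,2,2,0)) = emb (2,-4,2,-2) :=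
    rot_pi4_emb (-6) 2 2 0 2 (-4) 2 (-2) (by decide) (by decide) (by decide) (by decide)
  have s5 : rot (Real.pi / 4) (emb (2,-4,2,-2)) = emb (-2,0,-6,2) :=
    rot_pi4_emb 2 (-4) 2 (-2) (-2) 0 (-6) 2 (by decide) (by decide) (by decide) (by decide)
  have s6 : rot (Real.pi / 4) (emb (-2,0,-6,2)) = emb (-2,2,2,-4) :=
    rot_pi4_emb (-2) 0 (-6) 2 (-2) 2 2 (-4) (by decide) (by decide) (by decide) (by decide)
  have s7 : rot (Real.pi / 4) (emb (-2,2,2,-4)) = emb (6,-2,-2,0) :=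
    rot_pi4_emb (-2) 2 2 (-4) 6 (-2) (-2) 0 (by decide) (by decide) (by decide) (by decide)
  have c0 : rot (((0 : ℕ) : ℝ) * Real.pi / 4) (emb (-2,4,-2,2)) = emb (-2,4,-2,2) := by
    simp [rot]
  have c1 : rot (((1 : ℕ) : ℝ) * Real.pi / 4) (emb (-2,4,-2,2)) = emb (2,0,6,-2) :=
    rot_step 0 _ _ _ c0 s1
  have c2 : rot (((2 : ℕ) : ℝ) * Real.pi / 4) (emb (-2,4,-2,2)) = emb (2,-2,-2,4) :=
    rot_step 1 _ _ _ c1 s2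
  have c3 : rot (((3 : ℕ) : ℝ) * Real.pi / 4) (emb (-2,4,-2,2)) = emb (-6,2,2,0) :=
    rot_step 2 _ _ _ c2 s3
  have c4 : rot (((4 : ℕ) : ℝ) * Real.pi / 4) (emb (-2,4,-2,2)) = emb (2,-4,2,-2) :=
    rot_step 3 _ _ _ c3 s4
  have c5 : rot (((5 : ℕ) : ℝ) * Real.pi / 4) (emb (-2,4,-2,2)) = emb (-2,0,-6,2) :=
    rot_step 4 _ _ _ c4 s5
  have c6 : rot (((6 : ℕ) : ℝ) * Real.pi / 4) (emb (-2,4,-2,2)) = emb (-2,2,2,-4) :=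
    rot_step 5 _ _ _ c5 s6
  have c7 : rot (((7 : ℕ) : ℝ) * Real.pi / 4) (emb (-2,4,-2,2)) = emb (6,-2,-2,0) :=
    rot_step 6 _ _ _ c6 s7
  rintro x ⟨k, rfl⟩
  fin_cases k
  · exact ⟨(-2,4,-2,2), by decide, c0⟩
  · exact ⟨(2,0,6,-2), by decide, c1⟩
  · exact ⟨(2,-2,-2,4), by decide, c2⟩
  · exact ⟨(-6,2,2,0), by decide, c3⟩
  · exact ⟨(2,-4,2,-2), by decide, c4⟩
  · exact ⟨(-2,0,-6,2), by decide, c5⟩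
  · exact ⟨(-2,2,2,-4), by decide, c6⟩
  · exact ⟨(6,-2,-2,0), by decide, c7⟩

lemma orbit3 : ∀ x ∈ orb8 (emb (6,-2,2,0)), ∃ qq ∈ L32, x = emb qq := by
  have s1 : rot (Real.pi / 4) (emb (6,-2,2,0)) = emb (-2,2,-2,4) :=
    rot_pi4_emb 6 (-2) 2 0 (-2) 2 (-2) 4 (by decide) (by decide) (by decide) (by decide)
  have s2 : rot (Real.pi / 4) (emb (-2,2,-2,4)) = emb (-2,0,6,-2) :=
    rot_pi4_emb (-2) 2 (-2) 4 (-2) 0 6 (-2) (by decide) (by decide) (by decide) (by decide)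
  have s3 : rot (Real.pi / 4) (emb (-2,0,6,-2)) = emb (2,-4,-2,2) :=
    rot_pi4_emb (-2) 0 6 (-2) 2 (-4) (-2) 2 (by decide) (by decide) (by decide) (by decide)
  have s4 : rot (Real.pi / 4) (emb (2,-4,-2,2)) = emb (-6,2,-2,0) :=
    rot_pi4_emb 2 (-4) (-2) 2 (-6) 2 (-2) 0 (by decide) (by decide) (by decide) (by decide)
  have s5 : rot (Real.pi / 4) (emb (-6,2,-2,0)) = emb (2,-2,2,-4) :=
    rot_pi4_emb (-6) 2 (-2) 0 2 (-2) 2 (-4) (by decide) (by decide) (by decide) (by decide)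
  have s6 : rot (Real.pi / 4) (emb (2,-2,2,-4)) = emb (2,0,-6,2) :=
    rot_pi4_emb 2 (-2) 2 (-4) 2 0 (-6) 2 (by decide) (by decide) (by decide) (by decide)
  have s7 : rot (Real.pi / 4) (emb (2,0,-6,2)) = emb (-2,4,2,-2) :=
    rot_pi4_emb 2 0 (-6) 2 (-2) 4 2 (-2) (by decide) (by decide) (by decide) (by decide)
  have c0 : rot (((0 : ℕ) : ℝ) * Real.pi / 4) (emb (6,-2,2,0)) = emb (6,-2,2,0) := by
    simp [rot]
  have c1 : rot (((1 : ℕ) : ℝ) * Real.pi / 4) (emb (6,-2,2,0)) = emb (-2,2,-2,4) :=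
    rot_step 0 _ _ _ c0 s1
  have c2 : rot (((2 : ℕ) : ℝ) * Real.pi / 4) (emb (6,-2,2,0)) = emb (-2,0,6,-2) :=
    rot_step 1 _ _ _ c1 s2
  have c3 : rot (((3 : ℕ) : ℝ) * Real.pi / 4) (emb (6,-2,2,0)) = emb (2,-4,-2,2) :=
    rot_step 2 _ _ _ c2 s3
  have c4 : rot (((4 : ℕ) : ℝ) * Real.pi / 4) (emb (6,-2,2,0)) = emb (-6,2,-2,0) :=
    rot_step 3 _ _ _ c3 s4
  have c5 : rot (((5 : ℕ) : ℝ) * Real.pi / 4) (emb (6,-2,2,0)) = emb (2,-2,2,-4) :=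
    rot_step 4 _ _ _ c4 s5
  have c6 : rot (((6 : ℕ) : ℝ) * Real.pi / 4) (emb (6,-2,2,0)) = emb (2,0,-6,2) :=
    rot_step 5 _ _ _ c5 s6
  have c7 : rot (((7 : ℕ) : ℝ) * Real.pi / 4) (emb (6,-2,2,0)) = emb (-2,4,2,-2) :=
    rot_step 6 _ _ _ c6 s7
  rintro x ⟨k, rfl⟩
  fin_cases k
  · exact ⟨(6,-2,2,0), by decide, c0⟩
  · exact ⟨(-2,2,-2,4), by decide, c1⟩
  · exact ⟨(-2,0,6,-2), by decide, c2⟩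
  · exact ⟨(2,-4,-2,2), by decide, c3⟩
  · exact ⟨(-6,2,-2,0), by decide, c4⟩
  · exact ⟨(2,-2,2,-4), by decide, c5⟩
  · exact ⟨(2,0,-6,2), by decide, c6⟩
  · exact ⟨(-2,4,2,-2), by decide, c7⟩

lemma U32_sub : ∀ u ∈ U32, ∃ qq ∈ L32, u = emb qq := by
  intro u hu
  have e0 : ((4 : ℝ), (0 : ℝ)) = emb (4, 0, 0, 0) := by simp [emb]
  have e1 : ((2 + Real.sqrt 2 : ℝ), (Real.sqrt 2 : ℝ)) = emb (2, 1, 0, 1) := by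
    norm_num [emb]
  have e2 : ((-2 + 4 * Real.sqrt 2 : ℝ), (-2 + 2 * Real.sqrt 2 : ℝ)) = emb (-2, 4, -2, 2) := by
    norm_num [emb]
  have e3 : ((6 - 2 * Real.sqrt 2 : ℝ), (2 : ℝ)) = emb (6, -2, 2, 0) := by
    simp [emb]; constructor <;> · push_cast; ring
  rcases hu with ((h | h) | h) | h
  · exact orbit0 u (by rwa [e0] at h)
  · exact orbit1 u (by rwa [e1] at h)
  · exact orbit2 u (by rwa [e2] at h)
  · exact orbit3 u (by rwa [e3] at h)

lemma L32_facts : ∀ qq ∈ L32, psiq qq % 4 = 0 ∧ (psiq qq / 4) % 4 ≠ 0 := by decide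

open Classical in
def rep (t : ℝ) : ℤ × ℤ :=
  if h : ∃ p : ℤ × ℤ, t = (p.1 : ℝ) + (p.2 : ℝ) * Real.sqrt 2 then h.choose else (0, 0)

lemma rep_eq (a b : ℤ) : rep ((a : ℝ) + (b : ℝ) * Real.sqrt 2) = (a, b) := by
  have h : ∃ p : ℤ × ℤ, ((a : ℝ) + (b : ℝ) * Real.sqrt 2) =
      (p.1 : ℝ) + (p.2 : ℝ) * Real.sqrt 2 := ⟨(a, b), rfl⟩
  rw [rep, dif_pos h]
  obtain ⟨ha, hb⟩ := sqrt2_unique h.choose_spec.symm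
  exact Prod.ext ha hb

def psi (x : ℝ × ℝ) : ℤ := -(rep x.1).1 + (rep x.2).1 + 6 * (rep x.2).2

lemma psi_emb (q : Q4) : psi (emb q) = psiq q := by
  obtain ⟨a, b, c, d⟩ := q
  simp [psi, emb, rep_eq, psiq]

theorem U32_sum_four_colorable_for_expected_edges :
    ∃ c : ℝ × ℝ → Fin 4,
      ∀ x ∈ W32, ∀ y ∈ W32, x - y ∈ U32 → c x ≠ c y := by
  refine ⟨fun x => ((psi x / 4 : ℤ) : ZMod 4), ?_⟩
  rintro x ⟨u, hu, v, hv, rfl⟩ y ⟨u', hu', v', hv', rfl⟩ hsub heq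
  simp only [] at hsub heq
  obtain ⟨qa, hqa, rfl⟩ := U32_sub u hu
  obtain ⟨qb, hqb, rfl⟩ := U32_sub v hv
  obtain ⟨qc, hqc, rfl⟩ := U32_sub u' hu'
  obtain ⟨qd, hqd, rfl⟩ := U32_sub v' hv'
  obtain ⟨qe, hqe, he⟩ := U32_sub _ hsub
  have hx : emb qa + emb qb = emb (qa + qb) := (emb_add _ _).symm
  have hy' : emb qc + emb qd = emb (qc + qd) := (emb_add _ _).symm
  have hdiff : emb (qa + qb) - emb (qc + qd) = emb ((qa + qb) - (qc + qd)) :=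
    (emb_sub _ _).symm
  have hqe' : qe = (qa + qb) - (qc + qd) := by
    apply emb_inj
    rw [← he, hx, hy', hdiff]
  have hA := (L32_facts qa hqa).1
  have hB := (L32_facts qb hqb).1
  have hC := (L32_facts qc hqc).1
  have hD := (L32_facts qd hqd).1
  have hE2 := (L32_facts qe hqe).2
  have hEval : psiq qe = (psiq qa + psiq qb) - (psiq qc + psiq qd) := by
    rw [hqe', psiq_sub, psiq_add, psiq_add]
  have hpx : psi (emb qa + emb qb) = psiq qa + psiq qb := by
    rw [hx, psi_emb, psiq_add]
  have hpy : psi (emb qc + emb qd) = psiq qc + psiq qd := by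
    rw [hy', psi_emb, psiq_add]
  rw [hpx, hpy] at heq
  have hmod : ((psiq qa + psiq qb) / 4) % 4 = ((psiq qc + psiq qd) / 4) % 4 := by
    have := (ZMod.intCast_eq_intCast_iff' _ _ _).mp heq
    simpa using this
  omega

end
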